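/- arXiv:2508.16857 — 2 statements merged into one kernel-verified Lean document; each statement's English description precedes it below -/
import Mathlib

section
/- Let A, B, D be elements of a normed ring (e.g., real n×n matrices with the operator norm) such that A and A + D are both invertible. Then ‖(A + D)⁻¹(B + D) − A⁻¹B‖ ≤ ‖(A + D)⁻¹‖·‖D‖·(‖A⁻¹‖·‖B‖ + 1). -/
/-- Perturbation inequality: if `A` and `A + D` are invertible in a normed ring, then
`‖(A + D)⁻¹ (B + D) - A⁻¹ B‖ ≤ ‖(A + D)⁻¹‖ * ‖D‖ * (‖A⁻¹‖ * ‖B‖ + 1)`. -/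
theorem perturbation_inequality {E : Type*} [NormedRing E]
    (A C : Eˣ) (B D : E) (hC : ((C : Eˣ) : E) = (A : E) + D) :
    ‖((C⁻¹ : Eˣ) : E) * (B + D) - ((A⁻¹ : Eˣ) : E) * B‖ ≤
      ‖((C⁻¹ : Eˣ) : E)‖ * ‖D‖ * (‖((A⁻¹ : Eˣ) : E)‖ * ‖B‖ + 1) := by
  set a : E := ((A⁻¹ : Eˣ) : E) with ha
  set c : E := ((C⁻¹ : Eˣ) : E) with hc
  have hca : c - a = -(c * D * a) := by
    have h1 : c * (C : E) = 1 := C.inv_mul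
    have h2 : (A : E) * a = 1 := A.mul_inv
    have : c - a = c * ((A : E) - (C : E)) * a := by
      rw [mul_sub, sub_mul, mul_assoc, h2, mul_one, h1, one_mul]
    rw [this, hC]
    noncomm_ring
  have key : c * (B + D) - a * B = c * D - c * D * a * B := by
    have : c * (B + D) - a * B = (c - a) * B + c * D := by noncomm_ring
    rw [this, hca]
    noncomm_ring
  rw [key]
  calc ‖c * D - c * D * a * B‖ ≤ ‖c * D‖ + ‖c * D * a * B‖ := norm_sub_le _ _
    _ ≤ ‖c‖ * ‖D‖ + ‖c‖ * ‖D‖ * ‖a‖ * ‖B‖ := by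
        gcongr
        · exact norm_mul_le _ _
        · calc ‖c * D * a * B‖ ≤ ‖c * D * a‖ * ‖B‖ := norm_mul_le _ _
            _ ≤ ‖c * D‖ * ‖a‖ * ‖B‖ := by gcongr; exact norm_mul_le _ _
            _ ≤ ‖c‖ * ‖D‖ * ‖a‖ * ‖B‖ := by gcongr; exact norm_mul_le _ _
    _ = ‖c‖ * ‖D‖ * (‖a‖ * ‖B‖ + 1) := by noncomm_ring
end

section
/- Let A, B, D be elements of a complete normed ring (e.g., real n×n matrices with the operator norm) such that A is invertible and ‖A⁻¹‖·‖D‖ < 1. Then A + D is invertible and ‖(A + D)⁻¹(B + D) − A⁻¹B‖ ≤ (‖A⁻¹‖ / (1 − ‖A⁻¹‖·‖D‖)) · ‖D‖ · (‖A⁻¹‖·‖B‖ + 1). -/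
/-- Combined truncation error bound: in a complete normed ring, if `A` is invertible and
`‖A⁻¹‖ * ‖D‖ < 1`, then `A + D` is invertible and
`‖(A + D)⁻¹ (B + D) - A⁻¹ B‖ ≤ (‖A⁻¹‖ / (1 - ‖A⁻¹‖ * ‖D‖)) * ‖D‖ * (‖A⁻¹‖ * ‖B‖ + 1)`. -/
theorem truncation_error_bound {E : Type*} [NormedRing E] [CompleteSpace E]
    (A : Eˣ) (B D : E) (h : ‖((A⁻¹ : Eˣ) : E)‖ * ‖D‖ < 1) :
    ∃ C : Eˣ, ((C : Eˣ) : E) = (A : E) + D ∧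
      ‖((C⁻¹ : Eˣ) : E) * (B + D) - ((A⁻¹ : Eˣ) : E) * B‖ ≤
        (‖((A⁻¹ : Eˣ) : E)‖ / (1 - ‖((A⁻¹ : Eˣ) : E)‖ * ‖D‖)) * ‖D‖ *
          (‖((A⁻¹ : Eˣ) : E)‖ * ‖B‖ + 1) := by
  set a : E := ((A⁻¹ : Eˣ) : E) with ha_def
  have h1 : (0 : ℝ) < 1 - ‖a‖ * ‖D‖ := by linarith
  rcases subsingleton_or_nontrivial E with hE | hE
  · refine ⟨A, Subsingleton.elim _ _, ?_⟩
    have h0 : ‖((A⁻¹ : Eˣ) : E) * (B + D) - a * B‖ = 0 := by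
      rw [Subsingleton.elim (((A⁻¹ : Eˣ) : E) * (B + D) - a * B) 0, norm_zero]
    rw [h0]
    positivity
  · have ha : (0 : ℝ) < ‖a‖ := Units.norm_pos A⁻¹
    have hD : ‖D‖ < ‖a‖⁻¹ := by
      nlinarith [mul_inv_cancel₀ ha.ne', norm_nonneg D]
    refine ⟨A.add D hD, A.val_add D hD, ?_⟩
    set C : Eˣ := A.add D hD with hC_def
    set c : E := ((C⁻¹ : Eˣ) : E) with hc_def
    -- norm of u := -(a * D)
    have hu : ‖-(a * D)‖ < 1 := by
      rw [norm_neg]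
      exact lt_of_le_of_lt (norm_mul_le a D) h
    set u : E := -(a * D) with hu_def
    -- key bound on ‖c‖
    have hcval : c = (∑' n : ℕ, u ^ n) * a := by
      rw [hc_def, hC_def, Units.add, Units.copy_eq, mul_inv_rev]
      rfl
    have hsum : Summable fun n : ℕ => u ^ n := summable_geometric_of_norm_lt_one hu
    have hsum' : Summable fun n : ℕ => ‖u‖ ^ n * ‖a‖ :=
      (summable_geometric_of_lt_one (norm_nonneg u) hu).mul_right _
    have hterm : ∀ n : ℕ, ‖u ^ n * a‖ ≤ ‖u‖ ^ n * ‖a‖ := by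
      intro n
      cases n with
      | zero => simp
      | succ m =>
        calc ‖u ^ (m + 1) * a‖ ≤ ‖u ^ (m + 1)‖ * ‖a‖ := norm_mul_le _ _
          _ ≤ ‖u‖ ^ (m + 1) * ‖a‖ :=
            mul_le_mul_of_nonneg_right (norm_pow_le' u m.succ_pos) (norm_nonneg a)
    have hsumnorm : Summable fun n : ℕ => ‖u ^ n * a‖ :=
      Summable.of_nonneg_of_le (fun n => norm_nonneg _) hterm hsum'
    have hc_le : ‖c‖ ≤ ‖a‖ / (1 - ‖a‖ * ‖D‖) := by
      rw [hcval, ← hsum.tsum_mul_right a]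
      calc ‖∑' n : ℕ, u ^ n * a‖ ≤ ∑' n : ℕ, ‖u ^ n * a‖ := norm_tsum_le_tsum_norm hsumnorm
        _ ≤ ∑' n : ℕ, ‖u‖ ^ n * ‖a‖ := Summable.tsum_le_tsum hterm hsumnorm hsum'
        _ = (1 - ‖u‖)⁻¹ * ‖a‖ := by
            rw [(summable_geometric_of_lt_one (norm_nonneg u) hu).tsum_mul_right,
              tsum_geometric_of_lt_one (norm_nonneg u) hu]
        _ ≤ (1 - ‖a‖ * ‖D‖)⁻¹ * ‖a‖ := by
            have hule : ‖u‖ ≤ ‖a‖ * ‖D‖ := by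
              rw [hu_def, norm_neg]; exact norm_mul_le a D
            have : (1 : ℝ) - ‖a‖ * ‖D‖ ≤ 1 - ‖u‖ := by linarith
            exact mul_le_mul_of_nonneg_right (inv_anti₀ h1 this) (norm_nonneg a)
        _ = ‖a‖ / (1 - ‖a‖ * ‖D‖) := by rw [div_eq_inv_mul]
    -- algebraic identity
    have hCval : ((C : Eˣ) : E) = (A : E) + D := A.val_add D hD
    have hcA : c * ((A : E) + D) = 1 := by
      rw [← hCval]; exact C.inv_mul
    have hcAa : c = a - c * D * a := by
      have h2 : c * (A : E) = 1 - c * D := by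
        rw [mul_add] at hcA; exact eq_sub_of_add_eq hcA
      calc c = c * ((A : E) * a) := by rw [A.mul_inv, mul_one]
        _ = (c * (A : E)) * a := by rw [mul_assoc]
        _ = (1 - c * D) * a := by rw [h2]
        _ = a - c * D * a := by noncomm_ring
    have hiden : c * (B + D) - a * B = c * D - c * D * (a * B) := by
      calc c * (B + D) - a * B = (c - a) * B + c * D := by noncomm_ring
        _ = (-(c * D * a)) * B + c * D := by
            rw [show c - a = -(c * D * a) by nth_rewrite 1 [hcAa]; noncomm_ring]
        _ = c * D - c * D * (a * B) := by noncomm_ring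
    rw [hiden]
    have hbound : ‖c * D - c * D * (a * B)‖ ≤ ‖c‖ * ‖D‖ * (‖a‖ * ‖B‖ + 1) := by
      calc ‖c * D - c * D * (a * B)‖ ≤ ‖c * D‖ + ‖c * D * (a * B)‖ := norm_sub_le _ _
        _ ≤ ‖c‖ * ‖D‖ + ‖c * D‖ * ‖a * B‖ := by
            gcongr
            exacts [norm_mul_le _ _, norm_mul_le _ _]
        _ ≤ ‖c‖ * ‖D‖ + (‖c‖ * ‖D‖) * (‖a‖ * ‖B‖) := by
            gcongr
            exacts [norm_mul_le _ _, norm_mul_le _ _]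
        _ = ‖c‖ * ‖D‖ * (‖a‖ * ‖B‖ + 1) := by ring
    refine hbound.trans ?_
    have hfac : (0 : ℝ) ≤ ‖a‖ * ‖B‖ + 1 := by positivity
    gcongr
end
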